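/- arXiv:2207.08907 — 4 statements merged into one kernel-verified Lean document; each statement's English description precedes it below -/
import Mathlib

section
/- If η : ℝ → ℝ is twice differentiable and satisfies (1/2)·η''(ξ) + ξ·η'(ξ) − η(ξ) = 0 for every ξ ∈ ℝ, then η(ξ) = η(0)·(e^{−ξ²} + √π · ξ · erf(ξ)) + η'(0)·ξ for all ξ ∈ ℝ; that is, η(ξ) = A(e^{−ξ²} + √π ξ erf ξ) + Bξ with A = η(0), B = η'(0) is the general solution of this ODE. -/
/-!
`W ξ = ξ η'(ξ) - η(ξ)`, the Wronskian of `η` against the solution `ξ`, satisfies `W' = ξ η''`,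
which the equation turns into `W' = -2ξ W`; hence `W ξ = W 0 · e^{-ξ²} = -η(0) e^{-ξ²}`.
The equation then reads `η'' = -2W = 2η(0) e^{-ξ²}`, so integrating once gives
`η' = η'(0) + η(0) √π erf`, and `η = ξ η' - W` is the claimed formula.
-/

/-- The Gauss error function `erf x = (2/√π) ∫₀ˣ e^{-s²} ds`. -/
noncomputable def erf (x : ℝ) : ℝ :=
  (2 / Real.sqrt Real.pi) * ∫ s in (0:ℝ)..x, Real.exp (-s ^ 2)

open Real

theorem sqrt_pi_mul_erf (x : ℝ) : √π * erf x = 2 * ∫ s in (0:ℝ)..x, exp (-s ^ 2) := by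
  have : √π ≠ 0 := (sqrt_pos.mpr pi_pos).ne'
  rw [erf]
  field_simp

theorem eq_add_mul_erf_of_hasDerivAt {f : ℝ → ℝ} {c : ℝ}
    (hf : ∀ t, HasDerivAt f (2 * c * exp (-t ^ 2)) t) (x : ℝ) :
    f x = f 0 + c * (√π * erf x) := by
  have hint : IntervalIntegrable (fun s => 2 * c * exp (-s ^ 2)) MeasureTheory.volume 0 x :=
    (by fun_prop : Continuous fun s : ℝ => 2 * c * exp (-s ^ 2)).intervalIntegrable 0 x
  have hftc := intervalIntegral.integral_eq_sub_of_hasDerivAt (fun s _ => hf s) hint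
  simp only [mul_assoc, intervalIntegral.integral_const_mul] at hftc
  rw [sqrt_pi_mul_erf]
  linear_combination -hftc

theorem eq_mul_exp_sub_of_hasDerivAt {f a a' : ℝ → ℝ} (ha : ∀ t, HasDerivAt a (a' t) t)
    (hf : ∀ t, HasDerivAt f (a' t * f t) t) (t₀ t : ℝ) :
    f t = f t₀ * exp (a t - a t₀) := by
  have hderiv : ∀ t, HasDerivAt (fun t => f t * exp (-a t)) 0 t := fun t =>
    ((hf t).mul (ha t).fun_neg.exp).congr_deriv (by ring)
  have hconst := is_const_of_deriv_eq_zero (fun t => (hderiv t).differentiableAt)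
    (fun t => (hderiv t).deriv) t t₀
  calc f t = f t * exp (-a t) * exp (a t) := by rw [mul_assoc, ← exp_add]; simp
    _ = f t₀ * exp (a t - a t₀) := by rw [hconst, mul_assoc, ← exp_add]; ring_nf

theorem hasDerivAt_neg_sq (t : ℝ) : HasDerivAt (fun t => -t ^ 2) (-2 * t) t := by
  simpa using (hasDerivAt_pow 2 t).fun_neg

/-- If `η : ℝ → ℝ` is twice differentiable and satisfies
`(1/2) η''(ξ) + ξ η'(ξ) − η(ξ) = 0` for every `ξ`, then
`η(ξ) = η(0)(e^{−ξ²} + √π ξ erf ξ) + η'(0) ξ` for all `ξ`. -/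
theorem stmt1 (η : ℝ → ℝ)
    (hη : Differentiable ℝ η) (hη' : Differentiable ℝ (deriv η))
    (hode : ∀ ξ : ℝ, (1 / 2) * deriv (deriv η) ξ + ξ * deriv η ξ - η ξ = 0) :
    ∀ ξ : ℝ,
      η ξ = η 0 * (Real.exp (-ξ ^ 2) + Real.sqrt Real.pi * ξ * erf ξ)
            + deriv η 0 * ξ := by
  have hη'' : ∀ t, HasDerivAt (deriv η) (2 * η t - 2 * t * deriv η t) t := fun t =>
    (hη' t).hasDerivAt.congr_deriv (by linear_combination 2 * hode t)
  set W : ℝ → ℝ := fun t => t * deriv η t - η t with hW_def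
  have hW : ∀ t, HasDerivAt W (-2 * t * W t) t := fun t =>
    (((hasDerivAt_id t).mul (hη'' t)).sub (hη t).hasDerivAt).congr_deriv
      (by simp only [hW_def, id]; ring)
  have hW_eq : ∀ t, W t = -η 0 * exp (-t ^ 2) := fun t => by
    simpa [W] using eq_mul_exp_sub_of_hasDerivAt hasDerivAt_neg_sq hW 0 t
  have hη'_eq : ∀ t, deriv η t = deriv η 0 + η 0 * (√π * erf t) :=
    eq_add_mul_erf_of_hasDerivAt fun t =>
      (hη'' t).congr_deriv (by linear_combination -2 * hW_eq t)
  intro ξ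
  linear_combination -(hW_eq ξ) + ξ * hη'_eq ξ
end

section
/- Let q > 0, L₀ > 0 and Tₘ₀ > 0. Then there exists a unique γ > 0 such that q − L₀·γ = √π·(Tₘ₀/2 + L₀·γ²)·e^{γ²}·erf(γ), and this γ satisfies 0 < γ < q/L₀. -/
lemma erf_zero : erf 0 = 0 := by simp [erf]

lemma exp_neg_sq_intervalIntegrable (a b : ℝ) :
    IntervalIntegrable (fun s => Real.exp (-s ^ 2)) MeasureTheory.volume a b :=
  (Real.continuous_exp.comp (by continuity)).intervalIntegrable a b

lemma erf_strictMono : StrictMono erf := by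
  intro x y hxy
  have hsplit := intervalIntegral.integral_add_adjacent_intervals
    (exp_neg_sq_intervalIntegrable 0 x) (exp_neg_sq_intervalIntegrable x y)
  have hpos : 0 < ∫ s in x..y, Real.exp (-s ^ 2) :=
    intervalIntegral.intervalIntegral_pos_of_pos (exp_neg_sq_intervalIntegrable x y)
      (fun s => Real.exp_pos _) hxy
  have h2 : 0 < 2 / Real.sqrt Real.pi := by positivity
  have : (∫ s in (0:ℝ)..x, Real.exp (-s ^ 2)) < ∫ s in (0:ℝ)..y, Real.exp (-s ^ 2) := by
    linarith
  exact mul_lt_mul_of_pos_left this h2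

lemma erf_pos {x : ℝ} (hx : 0 < x) : 0 < erf x := by
  have := erf_strictMono hx
  rwa [erf_zero] at this

lemma erf_continuous : Continuous erf :=
  continuous_const.mul
    (intervalIntegral.continuous_primitive (fun a b => exp_neg_sq_intervalIntegrable a b) 0)

/-- Let `q > 0`, `L₀ > 0`, `Tₘ₀ > 0`. Then there exists a unique `γ > 0` with
`q − L₀ γ = √π (Tₘ₀/2 + L₀ γ²) e^{γ²} erf γ`, and this `γ` satisfies
`0 < γ < q/L₀`. -/
theorem stmt6 (q L₀ Tm₀ : ℝ) (hq : 0 < q) (hL : 0 < L₀) (hTm : 0 < Tm₀) :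
    (∃! γ : ℝ, 0 < γ ∧
      q - L₀ * γ =
        Real.sqrt Real.pi * (Tm₀ / 2 + L₀ * γ ^ 2) * Real.exp (γ ^ 2) * erf γ) ∧
    (∀ γ : ℝ, 0 < γ →
      q - L₀ * γ =
        Real.sqrt Real.pi * (Tm₀ / 2 + L₀ * γ ^ 2) * Real.exp (γ ^ 2) * erf γ →
      γ < q / L₀) := by
  have hsqrt : 0 < Real.sqrt Real.pi := Real.sqrt_pos.mpr Real.pi_pos
  set g : ℝ → ℝ := fun γ =>
    L₀ * γ + Real.sqrt Real.pi * (Tm₀ / 2 + L₀ * γ ^ 2) * Real.exp (γ ^ 2) * erf γ with hg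
  have hgcont : Continuous g := by
    apply Continuous.add (by continuity)
    exact (by continuity : Continuous fun γ : ℝ =>
      Real.sqrt Real.pi * (Tm₀ / 2 + L₀ * γ ^ 2) * Real.exp (γ ^ 2)).mul erf_continuous
  have hgmono : StrictMonoOn g (Set.Ici 0) := by
    intro x hx y hy hxy
    simp only [hg]
    have hx0 : (0:ℝ) ≤ x := hx
    have hAx : 0 < Tm₀ / 2 + L₀ * x ^ 2 := by positivity
    have hxy2 : x ^ 2 ≤ y ^ 2 := by nlinarith [pow_le_pow_left₀ hx0 hxy.le 2]
    have hA : Tm₀ / 2 + L₀ * x ^ 2 ≤ Tm₀ / 2 + L₀ * y ^ 2 := by nlinarith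
    have hB : Real.exp (x ^ 2) ≤ Real.exp (y ^ 2) := by
      exact Real.exp_le_exp.mpr hxy2
    have hEx : 0 ≤ erf x := by
      rcases eq_or_lt_of_le hx0 with h | h
      · simp [← h, erf_zero]
      · exact (erf_pos h).le
    have hE : erf x < erf y := erf_strictMono hxy
    have h1 : Real.sqrt Real.pi * (Tm₀ / 2 + L₀ * x ^ 2) * Real.exp (x ^ 2) * erf x ≤
        Real.sqrt Real.pi * (Tm₀ / 2 + L₀ * y ^ 2) * Real.exp (y ^ 2) * erf x := by
      apply mul_le_mul_of_nonneg_right _ hEx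
      gcongr
    have h2 : Real.sqrt Real.pi * (Tm₀ / 2 + L₀ * y ^ 2) * Real.exp (y ^ 2) * erf x <
        Real.sqrt Real.pi * (Tm₀ / 2 + L₀ * y ^ 2) * Real.exp (y ^ 2) * erf y := by
      apply mul_lt_mul_of_pos_left hE
      positivity
    nlinarith [mul_lt_mul_of_pos_left hxy hL]
  -- equivalence between the equation and g γ = q
  have hequiv : ∀ γ : ℝ,
      (q - L₀ * γ =
        Real.sqrt Real.pi * (Tm₀ / 2 + L₀ * γ ^ 2) * Real.exp (γ ^ 2) * erf γ) ↔ g γ = q := by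
    intro γ; simp only [hg]; constructor <;> intro h <;> linarith
  have hg0 : g 0 = 0 := by simp [hg, erf_zero]
  have hb : 0 < q / L₀ := by positivity
  have hgb : q < g (q / L₀) := by
    have : L₀ * (q / L₀) = q := by field_simp
    have hpos : 0 < Real.sqrt Real.pi * (Tm₀ / 2 + L₀ * (q / L₀) ^ 2) *
        Real.exp ((q / L₀) ^ 2) * erf (q / L₀) := by
      have := erf_pos hb; positivity
    simp only [hg]; linarith
  -- existence via IVT
  obtain ⟨γ, hγmem, hγeq⟩ : ∃ γ ∈ Set.Ioo (0:ℝ) (q / L₀), g γ = q := by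
    have := intermediate_value_Ioo hb.le hgcont.continuousOn (a := 0) (b := q / L₀)
    have hmem : q ∈ Set.Ioo (g 0) (g (q / L₀)) := by rw [hg0]; exact ⟨hq, hgb⟩
    obtain ⟨γ, hγ, hγq⟩ := this hmem
    exact ⟨γ, hγ, hγq⟩
  refine ⟨⟨γ, ⟨hγmem.1, (hequiv γ).mpr hγeq⟩, ?_⟩, ?_⟩
  · rintro γ' ⟨hγ'pos, hγ'eq⟩
    have h1 : g γ' = g γ := by rw [(hequiv γ').mp hγ'eq, hγeq]
    exact hgmono.injOn hγ'pos.le hγmem.1.le h1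
  · intro γ' hγ'pos heq
    have hpos : 0 < Real.sqrt Real.pi * (Tm₀ / 2 + L₀ * γ' ^ 2) *
        Real.exp (γ' ^ 2) * erf γ' := by
      have := erf_pos hγ'pos; positivity
    have : L₀ * γ' < q := by linarith
    exact (lt_div_iff₀ hL).mpr (by linarith)
end

section
/- Let q > 0, L₀ > 0, Tₘ₀ > 0, let γ > 0 satisfy q − L₀·γ = √π·(Tₘ₀/2 + L₀·γ²)·e^{γ²}·erf(γ), and set A = (q − L₀γ)/(√π·erf γ), T(y,t) = A·(2√t·e^{−y²/(4t)} + √π·y·erf(y/(2√t))) − q·y and S(t) = 2γ√t. Then the temperature on the free boundary satisfies T(S(t),t) = Tₘ₀·√t for every t > 0. -/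
/-- With `A = (q − L₀γ)/(√π erf γ)`,
`T(y,t) = A(2√t e^{−y²/(4t)} + √π y erf(y/(2√t))) − q y` and `S(t) = 2γ√t`,
the temperature on the free boundary satisfies `T(S(t),t) = Tₘ₀ √t` for `t > 0`. -/
theorem stmt7 (q L₀ Tm₀ γ A : ℝ) (hq : 0 < q) (hL : 0 < L₀) (hTm : 0 < Tm₀)
    (hγ : 0 < γ)
    (hγeq : q - L₀ * γ =
      Real.sqrt Real.pi * (Tm₀ / 2 + L₀ * γ ^ 2) * Real.exp (γ ^ 2) * erf γ)
    (hA : A = (q - L₀ * γ) / (Real.sqrt Real.pi * erf γ))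
    (T : ℝ → ℝ → ℝ)
    (hT : ∀ y t : ℝ, T y t =
      A * (2 * Real.sqrt t * Real.exp (-y ^ 2 / (4 * t))
            + Real.sqrt Real.pi * y * erf (y / (2 * Real.sqrt t))) - q * y)
    (S : ℝ → ℝ) (hS : ∀ t : ℝ, S t = 2 * γ * Real.sqrt t) :
    ∀ t : ℝ, 0 < t → T (S t) t = Tm₀ * Real.sqrt t := by
  intro t ht
  have hπ : (0:ℝ) < Real.sqrt Real.pi := Real.sqrt_pos.mpr Real.pi_pos
  have herf : 0 < erf γ := erf_pos hγ
  have hAval : A = (Tm₀ / 2 + L₀ * γ ^ 2) * Real.exp (γ ^ 2) := by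
    rw [hA, hγeq]
    field_simp
  have hst : 0 < Real.sqrt t := Real.sqrt_pos.mpr ht
  have hsq : Real.sqrt t ^ 2 = t := Real.sq_sqrt ht.le
  have h1 : -(2 * γ * Real.sqrt t) ^ 2 / (4 * t) = -γ ^ 2 := by
    field_simp
    nlinarith [hsq]
  have h2 : 2 * γ * Real.sqrt t / (2 * Real.sqrt t) = γ := by
    field_simp
  rw [hT, hS, h1, h2, hAval]
  have hexp : Real.exp (γ ^ 2) * Real.exp (-γ ^ 2) = 1 := by
    rw [← Real.exp_add]; simp
  have hq' : Real.sqrt Real.pi * erf γ * ((Tm₀ / 2 + L₀ * γ ^ 2) * Real.exp (γ ^ 2))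
      = q - L₀ * γ := by rw [hγeq]; ring
  linear_combination (2 * Real.sqrt t * (Tm₀ / 2 + L₀ * γ ^ 2)) * hexp
    + (2 * γ * Real.sqrt t) * hq'
end

section
/- Let δ be a real constant, let D ⊆ ℝ × (0,∞) be an open set, and let x* : D → ℝ be sufficiently smooth (C³ in y, C¹ in t, with jointly continuous derivatives) satisfying the Burgers equation ∂x*/∂t = ∂²x*/∂y² − 2δ·x*·∂x*/∂y on D and ∂x*/∂y ≠ 0 on D. Let Ψ : ℝ × (0,∞) → ℝ be twice continuously differentiable in its first variable and once in its second, and suppose Ψ(x*(y,t), t) = 1/(∂x*/∂y (y,t)) for all (y,t) ∈ D, where for each t the map y ↦ x*(y,t) is an open embedding of the t-slice of D. Then at every point (x*(y,t), t) with (y,t) ∈ D, Ψ satisfies the nonlinear evolution equation with source ∂Ψ/∂t = ∂/∂x ( (∂Ψ/∂x)/Ψ² ) + 2δ. -/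
/-!
Write `u = ∂x*/∂y`, so that `Ψ(x*, t) = 1/u`. Differentiating this identity in `y` expresses
`∂Ψ/∂x` and then `∂/∂x((∂Ψ/∂x)/Ψ²)` through `u` and its `y`-derivatives. For the time
derivative, the implicit function theorem gives a curve `τ ↦ (ζ τ, τ)` along which `x*` is
constant, so that `Ψ(x*(y,t), τ) = 1/u(ζ τ, τ)` with `ζ' = -(∂x*/∂t)/u`. Differentiating the
Burgers equation in `y` (using symmetry of mixed partials) gives `∂u/∂t`, and the two sides of
the claimed equation then agree by a rational identity.
-/

open Filter Topology

noncomputable def partialFst (f : ℝ × ℝ → ℝ) (p : ℝ × ℝ) : ℝ := deriv (fun x => f (x, p.2)) p.1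

noncomputable def partialSnd (f : ℝ × ℝ → ℝ) (p : ℝ × ℝ) : ℝ := deriv (fun t => f (p.1, t)) p.2

section Partial

variable {f g : ℝ × ℝ → ℝ} {p : ℝ × ℝ}

theorem HasFDerivAt.hasDerivAt_fst_slice {f' : ℝ × ℝ →L[ℝ] ℝ} (hf : HasFDerivAt f f' p) :
    HasDerivAt (fun x => f (x, p.2)) (f' (1, 0)) p.1 :=
  hf.comp_hasDerivAt p.1 ((hasDerivAt_id p.1).prodMk (hasDerivAt_const p.1 p.2))

theorem HasFDerivAt.hasDerivAt_snd_slice {f' : ℝ × ℝ →L[ℝ] ℝ} (hf : HasFDerivAt f f' p) :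
    HasDerivAt (fun t => f (p.1, t)) (f' (0, 1)) p.2 :=
  hf.comp_hasDerivAt p.2 ((hasDerivAt_const p.2 p.1).prodMk (hasDerivAt_id p.2))

theorem partialFst_eq_fderiv (hf : DifferentiableAt ℝ f p) :
    partialFst f p = fderiv ℝ f p (1, 0) :=
  hf.hasFDerivAt.hasDerivAt_fst_slice.deriv

theorem partialSnd_eq_fderiv (hf : DifferentiableAt ℝ f p) :
    partialSnd f p = fderiv ℝ f p (0, 1) :=
  hf.hasFDerivAt.hasDerivAt_snd_slice.deriv

theorem DifferentiableAt.hasDerivAt_partialFst (hf : DifferentiableAt ℝ f p) :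
    HasDerivAt (fun x => f (x, p.2)) (partialFst f p) p.1 :=
  partialFst_eq_fderiv hf ▸ hf.hasFDerivAt.hasDerivAt_fst_slice

theorem fderiv_apply_eq_partial (hf : DifferentiableAt ℝ f p) (v : ℝ × ℝ) :
    fderiv ℝ f p v = v.1 * partialFst f p + v.2 * partialSnd f p := by
  have hv : v = v.1 • ((1 : ℝ), (0 : ℝ)) + v.2 • ((0 : ℝ), (1 : ℝ)) := by simp
  rw [partialFst_eq_fderiv hf, partialSnd_eq_fderiv hf, hv, map_add, map_smul, map_smul]
  simp

theorem DifferentiableAt.hasDerivAt_comp_prodMk {a b : ℝ → ℝ} {a' b' t : ℝ}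
    (hf : DifferentiableAt ℝ f (a t, b t)) (ha : HasDerivAt a a' t) (hb : HasDerivAt b b' t) :
    HasDerivAt (fun τ => f (a τ, b τ))
      (a' * partialFst f (a t, b t) + b' * partialSnd f (a t, b t)) t := by
  have h := hf.hasFDerivAt.comp_hasDerivAt t (ha.prodMk hb)
  rwa [fderiv_apply_eq_partial hf] at h

theorem Filter.EventuallyEq.partialFst_eq (h : f =ᶠ[𝓝 p] g) :
    partialFst f p = partialFst g p :=
  (h.comp_tendsto ((continuous_id.prodMk continuous_const).tendsto p.1)).deriv_eq

theorem Filter.EventuallyEq.partialSnd_eq (h : f =ᶠ[𝓝 p] g) :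
    partialSnd f p = partialSnd g p :=
  (h.comp_tendsto ((continuous_const.prodMk continuous_id).tendsto p.2)).deriv_eq

theorem ContDiffAt.eventually_differentiableAt {n : WithTop ℕ∞} (hf : ContDiffAt ℝ n f p)
    (hn : 1 ≤ n) : ∀ᶠ q in 𝓝 p, DifferentiableAt ℝ f q :=
  ((hf.of_le hn).eventually (by simp)).mono fun _ hq => hq.differentiableAt one_ne_zero

theorem contDiffAt_partialFst {m n : WithTop ℕ∞} (hf : ContDiffAt ℝ n f p) (hmn : m + 1 ≤ n) :
    ContDiffAt ℝ m (partialFst f) p :=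
  ((hf.fderiv_right hmn).clm_apply (contDiffAt_const (c := ((1 : ℝ), (0 : ℝ)))))
    |>.congr_of_eventuallyEq
    ((hf.eventually_differentiableAt (le_add_self.trans hmn)).mono fun _ hq =>
      partialFst_eq_fderiv hq)

theorem ContDiffAt.partialSnd_partialFst (hf : ContDiffAt ℝ 2 f p) :
    partialSnd (partialFst f) p = partialFst (partialSnd f) p := by
  have hdiff := hf.eventually_differentiableAt (by norm_num)
  have hfst : partialFst f =ᶠ[𝓝 p] fun q => fderiv ℝ f q (1, 0) :=
    hdiff.mono fun _ hq => partialFst_eq_fderiv hq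
  have hsnd : partialSnd f =ᶠ[𝓝 p] fun q => fderiv ℝ f q (0, 1) :=
    hdiff.mono fun _ hq => partialSnd_eq_fderiv hq
  have hf' : DifferentiableAt ℝ (fderiv ℝ f) p :=
    (hf.fderiv_right (m := 1) (by norm_num)).differentiableAt one_ne_zero
  rw [hfst.partialSnd_eq, hsnd.partialFst_eq,
    partialSnd_eq_fderiv (hf'.clm_apply (differentiableAt_const _)),
    partialFst_eq_fderiv (hf'.clm_apply (differentiableAt_const _)),
    fderiv_clm_apply hf' (differentiableAt_const _),
    fderiv_clm_apply hf' (differentiableAt_const _)]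
  simpa using hf.isSymmSndFDerivAt (by simp) (0, 1) (1, 0)

theorem ContDiffAt.exists_implicit_curve (hf : ContDiffAt ℝ 1 f p) (h : partialFst f p ≠ 0)
    {s : Set (ℝ × ℝ)} (hs : s ∈ 𝓝 p) :
    ∃ ζ : ℝ → ℝ, ζ p.2 = p.1 ∧ HasDerivAt ζ (-partialSnd f p / partialFst f p) p.2 ∧
      ∀ᶠ τ in 𝓝 p.2, (ζ τ, τ) ∈ s ∧ f (ζ τ, τ) = f p := by
  have hd : DifferentiableAt ℝ f p := hf.differentiableAt one_ne_zero
  rw [partialFst_eq_fderiv hd] at h ⊢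
  rw [partialSnd_eq_fderiv hd]
  set L := fderiv ℝ f p
  -- `implicitFunctionOfProdDomain` solves for the second coordinate, so swap the variables.
  let swap : ℝ × ℝ →L[ℝ] ℝ × ℝ := ContinuousLinearEquiv.prodComm ℝ ℝ ℝ
  have hg : HasStrictFDerivAt (fun q : ℝ × ℝ => f (q.2, q.1)) (L ∘L swap) (p.2, p.1) :=
    (hf.hasStrictFDerivAt one_ne_zero).comp (p.2, p.1) swap.hasStrictFDerivAt
  have hA : ∀ x : ℝ, ((L ∘L swap) ∘L .inr ℝ ℝ ℝ) x = x * L (1, 0) := fun x => by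
    have hx : ((x, 0) : ℝ × ℝ) = x • ((1 : ℝ), (0 : ℝ)) := by simp
    change L (x, 0) = _
    rw [hx, map_smul, smul_eq_mul]
  have hinv : ((L ∘L swap) ∘L .inr ℝ ℝ ℝ).IsInvertible :=
    ⟨ContinuousLinearEquiv.unitsEquivAut ℝ (Units.mk0 _ h), by ext; simp [hA]⟩
  set ζ := hg.implicitFunctionOfProdDomain hinv
  have hζ : ζ p.2 = p.1 :=
    ((hg.eventually_apply_eq_iff_implicitFunctionOfProdDomain hinv).self_of_nhds).mp rfl
  refine ⟨ζ, hζ, ?_, ?_⟩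
  · refine (hg.hasStrictFDerivAt_implicitFunctionOfProdDomain hinv).hasFDerivAt.hasDerivAt
      |>.congr_deriv ?_
    have hinvA : ((L ∘L swap) ∘L .inr ℝ ℝ ℝ).inverse (L (0, 1)) = L (0, 1) / L (1, 0) := by
      rw [hinv.inverse_apply_eq, hA, div_mul_cancel₀ _ h]
    simp [swap, hinvA, neg_div]
  · have hcurve : Tendsto (fun τ => (ζ τ, τ)) (𝓝 p.2) (𝓝 p) := by
      have := ((hg.hasStrictFDerivAt_implicitFunctionOfProdDomain hinv).continuousAt.prodMk
        continuousAt_id).tendsto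
      change Tendsto _ (𝓝 p.2) (𝓝 (ζ p.2, p.2)) at this
      rwa [hζ] at this
    exact (hcurve.eventually_mem hs).and (hg.eventually_apply_implicitFunctionOfProdDomain hinv)

end Partial

theorem deriv_eq_div_of_comp_eventuallyEq {g φ k : ℝ → ℝ} {y φ' L : ℝ}
    (hg : DifferentiableAt ℝ g (φ y)) (hφ : HasDerivAt φ φ' y) (hφ' : φ' ≠ 0)
    (hk : HasDerivAt k L y) (hgk : (fun z => g (φ z)) =ᶠ[𝓝 y] k) :
    deriv g (φ y) = L / φ' :=
  eq_div_of_mul_eq hφ' ((hg.hasDerivAt.comp y hφ).unique (hk.congr_of_eventuallyEq hgk))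

theorem deriv_flux_of_comp_eq_one_div_deriv {φ ψ : ℝ → ℝ} {S : Set ℝ} (hS : IsOpen S)
    (hφ : ContDiffOn ℝ 3 φ S) (hφ' : ∀ z ∈ S, deriv φ z ≠ 0) (hψ : ContDiff ℝ 2 ψ)
    (hψφ : ∀ z ∈ S, ψ (φ z) = 1 / deriv φ z) {y : ℝ} (hy : y ∈ S) :
    deriv (fun x => deriv ψ x / ψ x ^ 2) (φ y) =
      (deriv (deriv φ) y ^ 2 - deriv φ y * deriv (deriv (deriv φ)) y) / deriv φ y ^ 3 := by
  have hφ1 : ContDiffOn ℝ 2 (deriv φ) S := hφ.deriv_of_isOpen hS (by norm_num)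
  have hφ2 : ContDiffOn ℝ 1 (deriv (deriv φ)) S := hφ1.deriv_of_isOpen hS (by norm_num)
  have hasDeriv {F : ℝ → ℝ} {n : WithTop ℕ∞} (hF : ContDiffOn ℝ n F S) (hn : n ≠ 0) {z : ℝ}
      (hz : z ∈ S) : HasDerivAt F (deriv F z) z :=
    ((hF.differentiableOn hn z hz).differentiableAt (hS.mem_nhds hz)).hasDerivAt
  have hψ' : ∀ z ∈ S, deriv ψ (φ z) = -deriv (deriv φ) z / deriv φ z ^ 2 / deriv φ z := by
    intro z hz
    refine deriv_eq_div_of_comp_eventuallyEq (hψ.differentiable (by norm_num) _)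
      (hasDeriv hφ (by norm_num) hz) (hφ' z hz) ((hasDeriv hφ1 (by norm_num) hz).inv (hφ' z hz)) ?_
    filter_upwards [hS.mem_nhds hz] with w hw
    rw [hψφ w hw, one_div, Pi.inv_apply]
  have hflux : (fun z => deriv ψ (φ z) / ψ (φ z) ^ 2) =ᶠ[𝓝 y]
      fun z => -deriv (deriv φ) z / deriv φ z := by
    filter_upwards [hS.mem_nhds hy] with z hz
    have := hφ' z hz
    rw [hψ' z hz, hψφ z hz]
    field_simp
  have hψy : ψ (φ y) ≠ 0 := by rw [hψφ y hy]; exact one_div_ne_zero (hφ' y hy)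
  have hdψ : Differentiable ℝ (deriv ψ) :=
    (hψ.iterate_deriv' 1 1).differentiable one_ne_zero
  rw [deriv_eq_div_of_comp_eventuallyEq (g := fun x => deriv ψ x / ψ x ^ 2)
    (k := fun z => -deriv (deriv φ) z / deriv φ z)
    ((hdψ _).div ((hψ.differentiable (by norm_num) _).pow 2) (pow_ne_zero 2 hψy))
    (hasDeriv hφ (by norm_num) hy) (hφ' y hy)
    ((hasDeriv hφ2 (by norm_num) hy).neg.div (hasDeriv hφ1 (by norm_num) hy) (hφ' y hy)) hflux]
  have := hφ' y hy
  simp only [Pi.neg_apply]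
  field_simp
  ring

theorem partialSnd_partialFst_of_burgers {X : ℝ × ℝ → ℝ} {p : ℝ × ℝ} {δ : ℝ}
    (hX : ContDiffAt ℝ 3 X p)
    (hburgers : partialSnd X =ᶠ[𝓝 p]
      fun q => partialFst (partialFst X) q - 2 * δ * X q * partialFst X q) :
    partialSnd (partialFst X) p = partialFst (partialFst (partialFst X)) p
      - 2 * δ * (partialFst X p ^ 2 + X p * partialFst (partialFst X) p) := by
  have hu := contDiffAt_partialFst (m := 2) hX (by norm_num)
  have huy := contDiffAt_partialFst (m := 1) hu (by norm_num)
  rw [(hX.of_le (by norm_num)).partialSnd_partialFst, hburgers.partialFst_eq]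
  refine HasDerivAt.deriv (((huy.differentiableAt one_ne_zero).hasDerivAt_partialFst.sub
    (((hX.differentiableAt (by norm_num)).hasDerivAt_partialFst.const_mul (2 * δ)).mul
      (hu.differentiableAt (by norm_num)).hasDerivAt_partialFst)).congr_deriv (by ring))

theorem hasDerivAt_of_eq_one_div_partialFst {X : ℝ × ℝ → ℝ} {p : ℝ × ℝ} {s : Set (ℝ × ℝ)}
    {F : ℝ → ℝ} (hX : ContDiffAt ℝ 2 X p) (hu : partialFst X p ≠ 0) (hs : s ∈ 𝓝 p)
    (hF : ∀ q ∈ s, X q = X p → F q.2 = 1 / partialFst X q) :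
    HasDerivAt F (-(-partialSnd X p / partialFst X p * partialFst (partialFst X) p
      + partialSnd (partialFst X) p) / partialFst X p ^ 2) p.2 := by
  obtain ⟨ζ, hζ, hζ', hev⟩ := (hX.of_le one_le_two).exists_implicit_curve hu hs
  have hud : DifferentiableAt ℝ (partialFst X) (ζ p.2, p.2) := by
    rw [hζ]; exact (contDiffAt_partialFst (m := 1) hX (by norm_num)).differentiableAt one_ne_zero
  have hcurve := (hud.hasDerivAt_comp_prodMk hζ' (hasDerivAt_id p.2)).inv (by rwa [hζ])
  simp only [id_eq, hζ, Prod.mk.eta, one_mul] at hcurve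
  refine hcurve.congr_of_eventuallyEq ?_
  filter_upwards [hev] with τ hτ using (hF _ hτ.1 hτ.2).trans (one_div _)

theorem stmt16_general (δ : ℝ) (D : Set (ℝ × ℝ))
    (hDopen : IsOpen D) (hDpos : ∀ p ∈ D, 0 < p.2)
    (xs : ℝ → ℝ → ℝ)
    (hxs_smooth : ContDiffOn ℝ 3 (fun p : ℝ × ℝ => xs p.1 p.2) D)
    (hburgers : ∀ y t : ℝ, (y, t) ∈ D →
      deriv (fun τ : ℝ => xs y τ) t =
        deriv (deriv (fun z : ℝ => xs z t)) y
          - 2 * δ * xs y t * deriv (fun z : ℝ => xs z t) y)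
    (hxs_y_ne : ∀ y t : ℝ, (y, t) ∈ D → deriv (fun z : ℝ => xs z t) y ≠ 0)
    (Ψ : ℝ → ℝ → ℝ)
    (hΨx : ∀ t : ℝ, 0 < t → ContDiff ℝ 2 (fun x : ℝ => Ψ x t))
    (hrecip : ∀ y t : ℝ, (y, t) ∈ D →
      Ψ (xs y t) t = 1 / deriv (fun z : ℝ => xs z t) y) :
    ∀ y t : ℝ, (y, t) ∈ D →
      deriv (fun τ : ℝ => Ψ (xs y t) τ) t =
        deriv (fun x : ℝ => deriv (fun x' : ℝ => Ψ x' t) x / (Ψ x t) ^ 2)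
          (xs y t) + 2 * δ := by
  intro y t hyt
  set X : ℝ × ℝ → ℝ := fun p => xs p.1 p.2
  have hD : D ∈ 𝓝 (y, t) := hDopen.mem_nhds hyt
  have hX : ContDiffAt ℝ 3 X (y, t) := hxs_smooth.contDiffAt hD
  have hu : partialFst X (y, t) ≠ 0 := hxs_y_ne y t hyt
  have hburgersX : partialSnd X =ᶠ[𝓝 (y, t)]
      fun q => partialFst (partialFst X) q - 2 * δ * X q * partialFst X q :=
    eventually_of_mem hD fun q hq => hburgers q.1 q.2 hq
  have htime := hasDerivAt_of_eq_one_div_partialFst (F := fun τ => Ψ (xs y t) τ)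
    (hX.of_le (by norm_num)) hu hD fun q hq hXq =>
      (congrArg (Ψ · q.2) hXq).symm.trans (hrecip q.1 q.2 hq)
  have hspace : deriv (fun x => deriv (fun x' => Ψ x' t) x / Ψ x t ^ 2) (X (y, t)) =
      (partialFst (partialFst X) (y, t) ^ 2
        - partialFst X (y, t) * partialFst (partialFst (partialFst X)) (y, t))
        / partialFst X (y, t) ^ 3 :=
    deriv_flux_of_comp_eq_one_div_deriv (φ := fun z => xs z t) (S := {z | (z, t) ∈ D})
      (hDopen.preimage (continuous_id.prodMk continuous_const))
      (hxs_smooth.comp (contDiff_id.prodMk contDiff_const).contDiffOn fun _ hz => hz)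
      (fun z hz => hxs_y_ne z t hz) (hΨx t (hDpos _ hyt)) (fun z hz => hrecip z t hz) hyt
  rw [htime.deriv, hspace, partialSnd_partialFst_of_burgers hX hburgersX,
    hburgersX.self_of_nhds]
  field_simp
  ring

/-- Let `δ ∈ ℝ`, `D ⊆ ℝ × (0,∞)` open, and `x*` sufficiently smooth (jointly
`C³`) on `D`, satisfying the Burgers equation `∂x*/∂t = ∂²x*/∂y² − 2δ x* ∂x*/∂y`
on `D` with `∂x*/∂y ≠ 0` on `D`. Let `Ψ` be `C²` in its first variable and `C¹`
in its second, with `Ψ(x*(y,t), t) = 1/(∂x*/∂y (y,t))` on `D`, where for each `t`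
the map `y ↦ x*(y,t)` is injective (an embedding) on the `t`-slice of `D`. Then
at every point `(x*(y,t), t)` with `(y,t) ∈ D`, `Ψ` satisfies the nonlinear
evolution equation with source `∂Ψ/∂t = ∂/∂x ((∂Ψ/∂x)/Ψ²) + 2δ`. -/
theorem stmt16 (δ : ℝ) (D : Set (ℝ × ℝ))
    (hDopen : IsOpen D) (hDpos : ∀ p ∈ D, 0 < p.2)
    (xs : ℝ → ℝ → ℝ)
    (hxs_smooth : ContDiffOn ℝ 3 (fun p : ℝ × ℝ => xs p.1 p.2) D)
    (hburgers : ∀ y t : ℝ, (y, t) ∈ D →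
      deriv (fun τ : ℝ => xs y τ) t =
        deriv (deriv (fun z : ℝ => xs z t)) y
          - 2 * δ * xs y t * deriv (fun z : ℝ => xs z t) y)
    (hxs_y_ne : ∀ y t : ℝ, (y, t) ∈ D → deriv (fun z : ℝ => xs z t) y ≠ 0)
    (Ψ : ℝ → ℝ → ℝ)
    (hΨx : ∀ t : ℝ, 0 < t → ContDiff ℝ 2 (fun x : ℝ => Ψ x t))
    (hΨt : ∀ x : ℝ, ∀ t : ℝ, 0 < t → DifferentiableAt ℝ (fun τ : ℝ => Ψ x τ) t)
    (hrecip : ∀ y t : ℝ, (y, t) ∈ D →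
      Ψ (xs y t) t = 1 / deriv (fun z : ℝ => xs z t) y)
    (hemb : ∀ t : ℝ, Set.InjOn (fun y : ℝ => xs y t) {y : ℝ | (y, t) ∈ D})
    (hopenmap : ∀ t : ℝ, IsOpen ((fun y : ℝ => xs y t) '' {y : ℝ | (y, t) ∈ D})) :
    ∀ y t : ℝ, (y, t) ∈ D →
      deriv (fun τ : ℝ => Ψ (xs y t) τ) t =
        deriv (fun x : ℝ => deriv (fun x' : ℝ => Ψ x' t) x / (Ψ x t) ^ 2)
          (xs y t) + 2 * δ :=
  stmt16_general δ D hDopen hDpos xs hxs_smooth hburgers hxs_y_ne Ψ hΨx hrecip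
end
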